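/- Let z and ẑ be block vectors (same block structure) with ‖z‖_F < 1. Then λ_min(e + z) ≥ 1 − ‖z‖_F > 0 (so the blockwise Jordan inverse (e + z)^{-1} exists) and ‖(e + z)^{-1}‖₂ ≤ 1/(1 − ‖z‖_F). If moreover ‖z − ẑ‖_F ≤ ξ for some ξ ≥ 0 with ‖z‖_F + ξ < 1, then ‖(e + z)^{-1} − (e + ẑ)^{-1}‖_F ≤ ξ / (1 − ‖z‖_F − ξ)². -/

import Mathlib

set_option synthInstance.maxHeartbeats 1000000
set_option maxHeartbeats 1000000

noncomputable section
open scoped BigOperators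

namespace SOCP

/-- `E k` is `ℝ^(k+1)`, written as `(x₀; x̄)` with `x̄ ∈ ℝ^k`. -/
abbrev E (k : ℕ) := EuclideanSpace ℝ (Fin (k + 1))

/-- Build an element of `E k` from a plain function. -/
def mk {k : ℕ} (f : Fin (k + 1) → ℝ) : E k := (WithLp.equiv 2 _).symm f

/-- The Euclidean norm `‖x̄‖` of the tail of `x`. -/
def tnorm {k : ℕ} (x : E k) : ℝ := Real.sqrt (∑ i : Fin k, (x i.succ) ^ 2)

/-- First Jordan eigenvalue `λ₁(x) = x₀ + ‖x̄‖`. -/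
def lam1 {k : ℕ} (x : E k) : ℝ := x 0 + tnorm x

/-- Second Jordan eigenvalue `λ₂(x) = x₀ − ‖x̄‖`. -/
def lam2 {k : ℕ} (x : E k) : ℝ := x 0 - tnorm x

/-- Jordan product `x ∘ y = (xᵀy; x₀ȳ + y₀x̄)`. -/
def jmul {k : ℕ} (x y : E k) : E k :=
  mk (fun j => if j = 0 then ∑ i, x i * y i else x 0 * y j + y 0 * x j)

/-- The Jordan identity `e = (1; 0)`. -/
def idE {k : ℕ} : E k := mk (fun j => if j = 0 then 1 else 0)

/-- First Jordan frame vector `c₁(x) = ½(1; x̄/‖x̄‖)`. -/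
def c1 {k : ℕ} (x : E k) : E k :=
  mk (fun j => if j = 0 then 1 / 2 else x j / (2 * tnorm x))

/-- Second Jordan frame vector `c₂(x) = ½(1; −x̄/‖x̄‖)`. -/
def c2 {k : ℕ} (x : E k) : E k :=
  mk (fun j => if j = 0 then 1 / 2 else -x j / (2 * tnorm x))

/-- Arrowhead matrix `Arw(x) = [[x₀, x̄ᵀ], [x̄, x₀ I]]`. -/
def Arw {k : ℕ} (x : E k) : Matrix (Fin (k + 1)) (Fin (k + 1)) ℝ :=
  Matrix.of fun i j =>
    if i = 0 then x j else if j = 0 then x i else if i = j then x 0 else 0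

/-- Quadratic representation `Q_x = 2 Arw(x)² − Arw(x ∘ x)`. -/
def Qmat {k : ℕ} (x : E k) : Matrix (Fin (k + 1)) (Fin (k + 1)) ℝ :=
  (2 : ℝ) • (Arw x * Arw x) - Arw (jmul x x)

/-- Jordan square root `x^{1/2} = √λ₁ c₁ + √λ₂ c₂` (equal to `(√x₀; 0)` when `x̄ = 0`). -/
def jsqrt {k : ℕ} (x : E k) : E k :=
  if tnorm x = 0 then mk (fun j => if j = 0 then Real.sqrt (x 0) else 0)
  else Real.sqrt (lam1 x) • c1 x + Real.sqrt (lam2 x) • c2 x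

/-- `T_x := Q_{x^{1/2}}`. -/
def Tmat {k : ℕ} (x : E k) : Matrix (Fin (k + 1)) (Fin (k + 1)) ℝ := Qmat (jsqrt x)

/-- Jordan inverse `x⁻¹ = λ₁⁻¹ c₁ + λ₂⁻¹ c₂` (equal to `(x₀⁻¹; 0)` when `x̄ = 0`). -/
def jinv {k : ℕ} (x : E k) : E k :=
  if tnorm x = 0 then mk (fun j => if j = 0 then (x 0)⁻¹ else 0)
  else (lam1 x)⁻¹ • c1 x + (lam2 x)⁻¹ • c2 x

/-- Matrix-vector product, as a map on `E k`. -/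
def mulVecE {k : ℕ} (M : Matrix (Fin (k + 1)) (Fin (k + 1)) ℝ) (v : E k) : E k :=
  mk (M.mulVec (WithLp.equiv 2 _ v))

/-- Block vectors `x = (x₁; …; x_r)` with `x_i ∈ ℝ^{d i + 2}` (so each block has dim ≥ 2). -/
abbrev BV {r : ℕ} (d : Fin r → ℕ) : Type := (i : Fin r) → E (d i + 1)

variable {r : ℕ} {d : Fin r → ℕ}

/-- Spectral norm `‖x‖₂ = max_i (|x_{i,0}| + ‖x̄_i‖)`. -/
def specNorm (x : BV d) : ℝ := ⨆ i, (|x i 0| + tnorm (x i))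

/-- Frobenius norm `‖x‖_F = √(Σ_i (λ₁(x_i)² + λ₂(x_i)²))`. -/
def frobNorm (x : BV d) : ℝ := Real.sqrt (∑ i, (lam1 (x i) ^ 2 + lam2 (x i) ^ 2))

/-- Minimum Jordan eigenvalue `λ_min(x) = min_i λ₂(x_i)`. -/
def lamMin (x : BV d) : ℝ := ⨅ i, lam2 (x i)

/-- Blockwise Jordan product. -/
def jmulB (x y : BV d) : BV d := fun i => jmul (x i) (y i)

/-- Block identity element. -/
def idB : BV d := fun _ => idE

/-- Membership in the interior of the product of Lorentz cones: `‖x̄_i‖ < x_{i,0}` for all `i`. -/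
def inIntLB (x : BV d) : Prop := ∀ i, tnorm (x i) < x i 0

/-- Euclidean inner product of the concatenated vectors. -/
def ip (x y : BV d) : ℝ := ∑ i, ∑ j, x i j * y i j

/-- Block-diagonal application of `T_x`: `(T_x s)_i = T_{x_i} s_i`. -/
def TB (x s : BV d) : BV d := fun i => mulVecE (Tmat (x i)) (s i)

/-- Distance from the central path `d(x, s, ν) = ‖T_x s − ν e‖_F`. -/
def cdist (x s : BV d) (ν : ℝ) : ℝ := frobNorm (TB x s - ν • (idB : BV d))

/-- Blockwise Jordan inverse. -/
def jinvB (x : BV d) : BV d := fun i => jinv (x i)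

/-!
Each block of `e + z` has `λ₂ ≥ 1 - (|z_{i,0}| + ‖z̄_i‖) ≥ 1 - √2 ‖z_i‖ ≥ 1 - ‖z‖_F`, and the
inverse block has spectral norm `1 / λ₂`; this gives the first two claims. For the perturbation
bound it suffices to show, block by block, `‖x⁻¹ - y⁻¹‖ ≤ ‖x - y‖ / (λ₂(x) λ₂(y))`. Writing
`x = (a; u)` and `y = (b; v)`, both sides of the squared inequality are affine in
`⟪u, v⟫ ∈ [-‖u‖ ‖v‖, ‖u‖ ‖v‖]`. At the two endpoints `x` and `y` share a Jordan frame, and the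
inequality splits into `(μ⁻¹ - ν⁻¹)² ≤ (μ - ν)² / m²` for pairs of eigenvalues with
`μ ν ≥ m = λ₂(x) λ₂(y)`.
-/

theorem nonneg_of_affine_nonneg_of_abs_le {A B m s : ℝ} (hs : |s| ≤ m)
    (hpos : 0 ≤ A + B * m) (hneg : 0 ≤ A - B * m) : 0 ≤ A + B * s := by
  obtain ⟨hlo, hhi⟩ := abs_le.mp hs
  rcases le_total 0 B with hB | hB <;> nlinarith

theorem inv_sub_inv_sq_le {μ ν m : ℝ} (hm : 0 < m) (hμν : m ≤ μ * ν) :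
    (μ⁻¹ - ν⁻¹) ^ 2 ≤ (μ - ν) ^ 2 / m ^ 2 := by
  have hμ : μ ≠ 0 := by rintro rfl; simp at hμν; linarith
  have hν : ν ≠ 0 := by rintro rfl; simp at hμν; linarith
  calc (μ⁻¹ - ν⁻¹) ^ 2 = (μ - ν) ^ 2 / (μ * ν) ^ 2 := by field_simp; ring
    _ ≤ (μ - ν) ^ 2 / m ^ 2 := by gcongr

theorem spin_inv_dist_sq_le_of_parallel {a p b q m : ℝ} (hm : 0 < m)
    (hp : 0 < a - p) (hp' : 0 < a + p) (hq : 0 < b - q) (hq' : 0 < b + q)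
    (h₁ : m ≤ (a - p) * (b - q)) (h₂ : m ≤ (a + p) * (b + q)) :
    (a / ((a + p) * (a - p)) - b / ((b + q) * (b - q))) ^ 2
        + (p / ((a + p) * (a - p)) - q / ((b + q) * (b - q))) ^ 2
      ≤ ((a - b) ^ 2 + (p - q) ^ 2) / m ^ 2 := by
  have hl : (a / ((a + p) * (a - p)) - b / ((b + q) * (b - q))) ^ 2
        + (p / ((a + p) * (a - p)) - q / ((b + q) * (b - q))) ^ 2
      = (((a - p)⁻¹ - (b - q)⁻¹) ^ 2 + ((a + p)⁻¹ - (b + q)⁻¹) ^ 2) / 2 := by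
    field_simp; ring
  have hr : ((a - b) ^ 2 + (p - q) ^ 2) / m ^ 2
      = ((a - p - (b - q)) ^ 2 / m ^ 2 + (a + p - (b + q)) ^ 2 / m ^ 2) / 2 := by
    field_simp; ring
  rw [hl, hr]
  gcongr
  · exact inv_sub_inv_sq_le hm h₁
  · exact inv_sub_inv_sq_le hm h₂

/-- With `x = (a; u)`, `y = (b; v)`, `p = ‖u‖`, `q = ‖v‖`, `s = ⟪u, v⟫`, and using
`x⁻¹ = (a; -u) / (λ₁(x) λ₂(x))`, this reads `‖x⁻¹ - y⁻¹‖² ≤ ‖x - y‖² / (λ₂(x) λ₂(y))²`. -/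
theorem spin_inv_dist_sq_le {a p b q s : ℝ} (hp : 0 ≤ p) (hq : 0 ≤ q) (ha : p < a) (hb : q < b)
    (hs : |s| ≤ p * q) :
    (a / ((a + p) * (a - p)) - b / ((b + q) * (b - q))) ^ 2
        + (p / ((a + p) * (a - p))) ^ 2 + (q / ((b + q) * (b - q))) ^ 2
        - 2 * s / ((a + p) * (a - p)) / ((b + q) * (b - q))
      ≤ ((a - b) ^ 2 + p ^ 2 + q ^ 2 - 2 * s) / ((a - p) * (b - q)) ^ 2 := by
  have hm : 0 < (a - p) * (b - q) := mul_pos (by linarith) (by linarith)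
  have parallel := spin_inv_dist_sq_le_of_parallel (a := a) (p := p) (b := b) (q := q) hm
    (by linarith) (by linarith) (by linarith) (by linarith) le_rfl (by nlinarith)
  have antiparallel := spin_inv_dist_sq_le_of_parallel (a := a) (p := p) (b := b) (q := -q) hm
    (by linarith) (by linarith) (by linarith) (by linarith) (by nlinarith) (by nlinarith)
  rw [show (b + -q) * (b - -q) = (b + q) * (b - q) by ring] at antiparallel
  -- as atoms, so that `ring` can split `(Dx * Dy)⁻¹` into `Dx⁻¹ * Dy⁻¹`
  generalize (a + p) * (a - p) = Dx at *
  generalize (b + q) * (b - q) = Dy at *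
  generalize ((a - p) * (b - q)) ^ 2 = M at *
  have := nonneg_of_affine_nonneg_of_abs_le (A := ((a - b) ^ 2 + p ^ 2 + q ^ 2) / M
      - (a / Dx - b / Dy) ^ 2 - (p / Dx) ^ 2 - (q / Dy) ^ 2) (B := 2 / (Dx * Dy) - 2 / M) hs
    (by linear_combination parallel) (by linear_combination antiparallel)
  linear_combination this

open RealInnerProductSpace

section

variable {k : ℕ}

@[simp] theorem mk_apply (f : Fin (k + 1) → ℝ) (j : Fin (k + 1)) : mk f j = f j := rfl

def tail (x : E k) : EuclideanSpace ℝ (Fin k) := WithLp.toLp 2 fun i => x i.succ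

@[simp] theorem tail_apply (x : E k) (i : Fin k) : tail x i = x i.succ := rfl

@[simp] theorem tail_sub (x y : E k) : tail (x - y) = tail x - tail y := rfl

@[simp] theorem tail_add (x y : E k) : tail (x + y) = tail x + tail y := rfl

@[simp] theorem tail_idE : tail (idE : E k) = 0 := by
  ext i
  simp [idE, mk, Fin.succ_ne_zero]

theorem tnorm_eq_norm_tail (x : E k) : tnorm x = ‖tail x‖ := by
  simp [tnorm, EuclideanSpace.norm_eq]

theorem tnorm_nonneg (x : E k) : 0 ≤ tnorm x := Real.sqrt_nonneg _

theorem norm_sq_eq (x : E k) : ‖x‖ ^ 2 = x 0 ^ 2 + tnorm x ^ 2 := by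
  simp [EuclideanSpace.norm_sq_eq, Fin.sum_univ_succ, tnorm_eq_norm_tail]

theorem norm_sub_sq_eq (x y : E k) :
    ‖x - y‖ ^ 2 = (x 0 - y 0) ^ 2 + tnorm x ^ 2 + tnorm y ^ 2 - 2 * ⟪tail x, tail y⟫ := by
  rw [norm_sq_eq, tnorm_eq_norm_tail, tail_sub, norm_sub_sq_real, tnorm_eq_norm_tail,
    tnorm_eq_norm_tail, PiLp.sub_apply]
  ring

theorem lam1_sq_add_lam2_sq (x : E k) : lam1 x ^ 2 + lam2 x ^ 2 = 2 * ‖x‖ ^ 2 := by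
  rw [norm_sq_eq, lam1, lam2]
  ring

theorem abs_add_tnorm_le (x : E k) : |x 0| + tnorm x ≤ √2 * ‖x‖ := by
  rw [← Real.sqrt_sq (norm_nonneg x), ← Real.sqrt_mul zero_le_two,
    Real.le_sqrt (by positivity [tnorm_nonneg x]) (by positivity), norm_sq_eq]
  nlinarith [sq_nonneg (|x 0| - tnorm x), sq_abs (x 0)]

theorem idE_add_apply_zero (v : E k) : (idE + v : E k) 0 = 1 + v 0 := rfl

theorem lam2_idE_add (v : E k) : lam2 (idE + v) = 1 + v 0 - tnorm v := by
  rw [lam2, idE_add_apply_zero, tnorm_eq_norm_tail, tnorm_eq_norm_tail, tail_add, tail_idE,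
    zero_add]

theorem one_sub_le_lam2_idE_add {v : E k} {c : ℝ} (h : √2 * ‖v‖ ≤ c) :
    1 - c ≤ lam2 (idE + v) := by
  rw [lam2_idE_add]
  linarith [neg_abs_le (v 0), abs_add_tnorm_le v]

theorem lam1_pos_of_lam2_pos {x : E k} (hx : 0 < lam2 x) : 0 < lam1 x := by
  rw [lam2] at hx
  rw [lam1]
  linarith [tnorm_nonneg x]

theorem jinv_apply {x : E k} (hx : 0 < lam2 x) (j : Fin (k + 1)) :
    jinv x j = (if j = 0 then x 0 else -x j) / (lam1 x * lam2 x) := by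
  have hl1 : x 0 + tnorm x ≠ 0 := (lam1_pos_of_lam2_pos hx).ne'
  have hl2 : x 0 - tnorm x ≠ 0 := hx.ne'
  by_cases h : tnorm x = 0
  · rw [jinv, if_pos h, lam1, lam2, h, add_zero, sub_zero]
    rcases Fin.eq_zero_or_eq_succ j with rfl | ⟨i, rfl⟩
    · simp [mk]
    · have htail : tail x = 0 := by rwa [tnorm_eq_norm_tail, norm_eq_zero] at h
      have hxi : x i.succ = 0 := by simpa using congrArg (· i) htail
      simp [mk, Fin.succ_ne_zero, hxi]
  · rw [jinv, if_neg h, PiLp.add_apply, PiLp.smul_apply, PiLp.smul_apply]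
    rcases eq_or_ne j 0 with rfl | hj <;>
      simp only [c1, c2, mk_apply, lam1, lam2, if_true, if_false, smul_eq_mul, *] <;>
      field_simp <;>
      ring

theorem lam1_mul_lam2_pos {x : E k} (hx : 0 < lam2 x) : 0 < lam1 x * lam2 x :=
  mul_pos (lam1_pos_of_lam2_pos hx) hx

theorem jinv_apply_zero {x : E k} (hx : 0 < lam2 x) : jinv x 0 = x 0 / (lam1 x * lam2 x) := by
  simp [jinv_apply hx]

theorem tail_jinv {x : E k} (hx : 0 < lam2 x) :
    tail (jinv x) = -((lam1 x * lam2 x)⁻¹ • tail x) := by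
  ext i
  simp [jinv_apply hx, Fin.succ_ne_zero, div_eq_inv_mul]

theorem tnorm_jinv {x : E k} (hx : 0 < lam2 x) :
    tnorm (jinv x) = tnorm x / (lam1 x * lam2 x) := by
  rw [tnorm_eq_norm_tail, tail_jinv hx, norm_neg, norm_smul, norm_inv, Real.norm_eq_abs,
    abs_of_pos (lam1_mul_lam2_pos hx), tnorm_eq_norm_tail, inv_mul_eq_div]

theorem abs_add_tnorm_jinv {x : E k} (hx : 0 < lam2 x) :
    |jinv x 0| + tnorm (jinv x) = 1 / lam2 x := by
  have hx0 : 0 < x 0 := by rw [lam2] at hx; linarith [tnorm_nonneg x]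
  rw [jinv_apply_zero hx, tnorm_jinv hx, abs_of_pos (div_pos hx0 (lam1_mul_lam2_pos hx)),
    ← add_div, show x 0 + tnorm x = lam1 x from rfl,
    div_mul_cancel_left₀ (lam1_pos_of_lam2_pos hx).ne', one_div]

theorem norm_jinv_sub_jinv_le {x y : E k} (hx : 0 < lam2 x) (hy : 0 < lam2 y) :
    ‖jinv x - jinv y‖ ≤ ‖x - y‖ / (lam2 x * lam2 y) := by
  have hxy : 0 < lam2 x * lam2 y := mul_pos hx hy
  rw [← pow_le_pow_iff_left₀ (norm_nonneg _) (by positivity) two_ne_zero, div_pow,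
    norm_sub_sq_eq, norm_sub_sq_eq, jinv_apply_zero hx, jinv_apply_zero hy, tnorm_jinv hx,
    tnorm_jinv hy, tail_jinv hx, tail_jinv hy, inner_neg_neg, real_inner_smul_left,
    real_inner_smul_right]
  have key := spin_inv_dist_sq_le (tnorm_nonneg x) (tnorm_nonneg y)
    (show tnorm x < x 0 by rw [lam2] at hx; linarith)
    (show tnorm y < y 0 by rw [lam2] at hy; linarith)
    ((abs_real_inner_le_norm (tail x) (tail y)).trans_eq
      (by rw [tnorm_eq_norm_tail, tnorm_eq_norm_tail]))
  simp only [lam1, lam2] at key ⊢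
  linear_combination key

end

theorem frobNorm_eq (x : BV d) : frobNorm x = √(∑ i, 2 * ‖x i‖ ^ 2) := by
  simp only [frobNorm, lam1_sq_add_lam2_sq]

theorem sqrt_two_mul_norm_le_frobNorm (x : BV d) (i : Fin r) : √2 * ‖x i‖ ≤ frobNorm x := by
  rw [frobNorm_eq, ← Real.sqrt_sq (norm_nonneg (x i)), ← Real.sqrt_mul zero_le_two]
  exact Real.sqrt_le_sqrt
    (Finset.single_le_sum (f := fun j => 2 * ‖x j‖ ^ 2) (fun _ _ => by positivity)
      (Finset.mem_univ i))

theorem frobNorm_le_mul_of_norm_le {x y : BV d} {c : ℝ} (hc : 0 ≤ c)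
    (h : ∀ i, ‖x i‖ ≤ c * ‖y i‖) : frobNorm x ≤ c * frobNorm y := by
  rw [frobNorm_eq, frobNorm_eq, ← Real.sqrt_sq hc, ← Real.sqrt_mul (sq_nonneg c), Finset.mul_sum]
  refine Real.sqrt_le_sqrt (Finset.sum_le_sum fun i _ => ?_)
  nlinarith [h i, norm_nonneg (x i)]

theorem one_sub_frobNorm_le_lam2 (z : BV d) (i : Fin r) :
    1 - frobNorm z ≤ lam2 ((idB + z : BV d) i) :=
  one_sub_le_lam2_idE_add (sqrt_two_mul_norm_le_frobNorm z i)

theorem one_sub_frobNorm_sub_frobNorm_le_lam2 (z z' : BV d) (i : Fin r) :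
    1 - frobNorm z - frobNorm (z - z') ≤ lam2 ((idB + z' : BV d) i) := by
  rw [sub_sub]
  refine one_sub_le_lam2_idE_add ?_
  calc √2 * ‖z' i‖ ≤ √2 * ‖z i‖ + √2 * ‖(z - z') i‖ := by
        rw [← mul_add]; gcongr; exact norm_le_norm_add_norm_sub (z i) (z' i)
    _ ≤ frobNorm z + frobNorm (z - z') :=
        add_le_add (sqrt_two_mul_norm_le_frobNorm z i) (sqrt_two_mul_norm_le_frobNorm _ i)

theorem specNorm_jinvB_le {x : BV d} {m : ℝ} (hm : 0 < m) (hx : ∀ i, m ≤ lam2 (x i)) :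
    specNorm (jinvB x) ≤ 1 / m :=
  Real.iSup_le (fun i => by
    rw [jinvB, abs_add_tnorm_jinv (hm.trans_le (hx i))]
    exact one_div_le_one_div_of_le hm (hx i)) (by positivity)

theorem frobNorm_jinvB_sub_jinvB_le {x y : BV d} {m : ℝ} (hm : 0 < m)
    (hx : ∀ i, m ≤ lam2 (x i)) (hy : ∀ i, m ≤ lam2 (y i)) :
    frobNorm (jinvB x - jinvB y) ≤ frobNorm (x - y) / m ^ 2 := by
  rw [div_eq_inv_mul]
  refine frobNorm_le_mul_of_norm_le (by positivity) fun i => ?_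
  calc ‖jinv (x i) - jinv (y i)‖ ≤ ‖x i - y i‖ / (lam2 (x i) * lam2 (y i)) :=
        norm_jinv_sub_jinv_le (hm.trans_le (hx i)) (hm.trans_le (hy i))
    _ ≤ ‖x i - y i‖ / (m * m) := by
        have := hx i
        have := hy i
        gcongr
        exact hm.le.trans (hx i)
    _ = (m ^ 2)⁻¹ * ‖(x - y) i‖ := by rw [Pi.sub_apply]; ring

/-- For a block vector `z` with `‖z‖_F < 1`: `λ_min(e + z) ≥ 1 − ‖z‖_F > 0`,
`‖(e + z)⁻¹‖₂ ≤ 1/(1 − ‖z‖_F)`, and if `‖z − ẑ‖_F ≤ ξ` with `‖z‖_F + ξ < 1` then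
`‖(e + z)⁻¹ − (e + ẑ)⁻¹‖_F ≤ ξ/(1 − ‖z‖_F − ξ)²`. -/
theorem jinv_perturbation_bound {r : ℕ} {d : Fin r → ℕ} (hr : 0 < r) (z z' : BV d)
    (hz : frobNorm z < 1) :
    (1 - frobNorm z ≤ lamMin (idB + z) ∧ 0 < 1 - frobNorm z) ∧
    specNorm (jinvB (idB + z)) ≤ 1 / (1 - frobNorm z) ∧
    (∀ ξ : ℝ, 0 ≤ ξ → frobNorm (z - z') ≤ ξ → frobNorm z + ξ < 1 →
      frobNorm (jinvB (idB + z) - jinvB (idB + z')) ≤ ξ / (1 - frobNorm z - ξ) ^ 2) := by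
  have : Nonempty (Fin r) := Fin.pos_iff_nonempty.mp hr
  have hpos : 0 < 1 - frobNorm z := sub_pos.mpr hz
  have hlam := one_sub_frobNorm_le_lam2 z
  refine ⟨⟨le_ciInf hlam, hpos⟩, specNorm_jinvB_le hpos hlam, fun ξ hξ hzz' hlt => ?_⟩
  have hm : 0 < 1 - frobNorm z - ξ := by linarith
  have hlam' : ∀ i, 1 - frobNorm z - ξ ≤ lam2 ((idB + z' : BV d) i) := fun i => by
    linarith [one_sub_frobNorm_sub_frobNorm_le_lam2 z z' i]
  calc frobNorm (jinvB (idB + z) - jinvB (idB + z'))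
      ≤ frobNorm ((idB + z) - (idB + z')) / (1 - frobNorm z - ξ) ^ 2 :=
        frobNorm_jinvB_sub_jinvB_le hm (fun i => by linarith [hlam i]) hlam'
    _ ≤ ξ / (1 - frobNorm z - ξ) ^ 2 := by
        rw [add_sub_add_left_eq_sub]
        gcongr

end SOCP
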